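/- Let α ≥ ω₁ be a regular cardinal and 2 ≤ n < ω. If there exists a prime map f : C⁻(α,n) → C⁻(α,n+1), then there exists a prime map f' : C⁻(α,n) → C⁻(α,n+1) such that, identifying α^n with α × α^{n-1} and α^{n+1} with α × α^n, for every ξ < α the image f'({ξ} × α^{n-1}) is disjoint from ⋃_{η<ξ} {η} × α^n. -/

import Mathlib

universe u v

/-- `CIdx K m` represents the set `αⁿ` for `n = m+1`, where `K` plays the role of `α`. -/
def CIdx (K : Type u) : ℕ → Type u
  | 0 => K
  | m + 1 => K × CIdx K m

/-- Given a subset `U` of `(α × αⁿ) ∪ {∞}` and `ξ`, the set `{x ∈ αⁿ : (ξ,x) ∈ U} ∪ {∞}`. -/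
def cslice {K J : Type u} (U : Set (Option (K × J))) (ξ : K) : Set (Option J) :=
  insert none (Option.some '' {x : J | Option.some (ξ, x) ∈ U})

/-- The openness predicate of the space `C⁻(α, m+1)`. -/
def CIsOpen (K : Type u) : (m : ℕ) → Set (Option (CIdx K m)) → Prop
  | 0, U => none ∈ U → Cardinal.mk ((Option.some ⁻¹' U)ᶜ : Set K) < Cardinal.mk K
  | m + 1, U => none ∈ U →
      Cardinal.mk (({ξ : K | CIsOpen K m (cslice U ξ)}ᶜ : Set K)) < Cardinal.mk K

theorem cslice_mono {K J : Type u} {U V : Set (Option (K × J))} (h : U ⊆ V) (ξ : K) :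
    cslice U ξ ⊆ cslice V ξ := by
  intro z hz
  rcases hz with hz | hz
  · exact Or.inl hz
  · rcases hz with ⟨x, hx, rfl⟩
    exact Or.inr ⟨x, h hx, rfl⟩

theorem none_mem_cslice {K J : Type u} (U : Set (Option (K × J))) (ξ : K) :
    none ∈ cslice U ξ := Set.mem_insert _ _

theorem cisOpen_of_none_not_mem (K : Type u) (m : ℕ) (U : Set (Option (CIdx K m)))
    (h : none ∉ U) : CIsOpen K m U := by
  cases m with
  | zero => exact fun hU => absurd hU h
  | succ m => exact fun hU => absurd hU h

theorem cisOpen_mono (K : Type u) (m : ℕ) :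
    ∀ U V : Set (Option (CIdx K m)), CIsOpen K m U → U ⊆ V → (none ∈ V → none ∈ U) →
      CIsOpen K m V := by
  induction m with
  | zero =>
    intro U V hU hUV hnone hV
    refine lt_of_le_of_lt (Cardinal.mk_le_mk_of_subset ?_) (hU (hnone hV))
    intro k hk hU'
    exact hk (hUV hU')
  | succ m ih =>
    intro U V hU hUV hnone hV
    refine lt_of_le_of_lt (Cardinal.mk_le_mk_of_subset ?_) (hU (hnone hV))
    intro ξ hξ hopen
    exact hξ (ih _ _ hopen (cslice_mono hUV ξ) (fun _ => none_mem_cslice U ξ))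

theorem cslice_univ {K J : Type u} (ξ : K) :
    cslice (Set.univ : Set (Option (K × J))) ξ = Set.univ := by
  ext z
  cases z with
  | none => simp [cslice]
  | some j => simp [cslice]

theorem cisOpen_univ (K : Type u) [Nonempty K] (m : ℕ) : CIsOpen K m Set.univ := by
  cases m with
  | zero =>
    intro _
    change Cardinal.mk ((Option.some ⁻¹' (Set.univ : Set (Option K)))ᶜ : Set K) < Cardinal.mk K
    simp only [Set.preimage_univ, Set.compl_univ, Cardinal.mk_emptyCollection]
    exact Cardinal.mk_ne_zero K |>.bot_lt
  | succ m =>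
    intro _
    have h : ({ξ : K | CIsOpen K m (cslice (Set.univ : Set (Option (CIdx K (m+1)))) ξ)}ᶜ : Set K)
        = ∅ := by
      ext ξ
      simp only [Set.mem_compl_iff, Set.mem_setOf_eq, Set.mem_empty_iff_false, iff_false, not_not]
      change CIsOpen K m (cslice (Set.univ : Set (Option (K × CIdx K m))) ξ)
      rw [cslice_univ]
      exact cisOpen_univ K m
    rw [h, Cardinal.mk_emptyCollection]
    exact Cardinal.mk_ne_zero K |>.bot_lt

theorem some_mem_cslice_iff {K J : Type u} (U : Set (Option (K × J))) (ξ : K) (x : J) :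
    some x ∈ cslice U ξ ↔ some (ξ, x) ∈ U := by
  simp [cslice]

theorem cslice_inter {K J : Type u} (U V : Set (Option (K × J))) (ξ : K) :
    cslice (U ∩ V) ξ = cslice U ξ ∩ cslice V ξ := by
  ext z
  cases z with
  | none => simp [none_mem_cslice]
  | some x => simp [some_mem_cslice_iff]

theorem cisOpen_inter (K : Type u) [Infinite K] (m : ℕ) :
    ∀ U V : Set (Option (CIdx K m)), CIsOpen K m U → CIsOpen K m V →
      CIsOpen K m (U ∩ V) := by
  induction m with
  | zero =>
    intro U V hU hV h
    have hsub : ((Option.some ⁻¹' (U ∩ V))ᶜ : Set K) ⊆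
        (Option.some ⁻¹' U)ᶜ ∪ (Option.some ⁻¹' V)ᶜ := by
      intro k hk
      by_contra hc
      exact hk ⟨Classical.byContradiction fun h1 => hc (Or.inl h1),
        Classical.byContradiction fun h2 => hc (Or.inr h2)⟩
    refine lt_of_le_of_lt (Cardinal.mk_le_mk_of_subset hsub) ?_
    refine lt_of_le_of_lt (Cardinal.mk_union_le _ _) ?_
    exact Cardinal.add_lt_of_lt (Cardinal.aleph0_le_mk K) (hU h.1) (hV h.2)
  | succ m ih =>
    intro U V hU hV h
    have hsub : ({ξ : K | CIsOpen K m (cslice (U ∩ V) ξ)}ᶜ : Set K) ⊆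
        {ξ : K | CIsOpen K m (cslice U ξ)}ᶜ ∪ {ξ : K | CIsOpen K m (cslice V ξ)}ᶜ := by
      intro ξ hξ
      by_contra hc
      have e : cslice (U ∩ V) ξ = cslice U ξ ∩ cslice V ξ := cslice_inter U V ξ
      exact hξ (Eq.mpr (congrArg (CIsOpen K m) e)
        (ih _ _ (Classical.byContradiction fun h1 => hc (Or.inl h1))
          (Classical.byContradiction fun h2 => hc (Or.inr h2))))
    refine lt_of_le_of_lt (Cardinal.mk_le_mk_of_subset hsub) ?_
    refine lt_of_le_of_lt (Cardinal.mk_union_le _ _) ?_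
    exact Cardinal.add_lt_of_lt (Cardinal.aleph0_le_mk K) (hU h.1) (hV h.2)

theorem cisOpen_sUnion (K : Type u) (m : ℕ) (S : Set (Set (Option (CIdx K m))))
    (hS : ∀ U ∈ S, CIsOpen K m U) : CIsOpen K m (⋃₀ S) := by
  by_cases h : none ∈ ⋃₀ S
  · obtain ⟨U, hUS, hU⟩ := h
    exact cisOpen_mono K m U _ (hS U hUS) (Set.subset_sUnion_of_mem hUS) (fun _ => hU)
  · exact cisOpen_of_none_not_mem _ _ _ h

/-- The space `C⁻(α, m+1)` from the paper (so `m = 0` gives `C(α)` itself);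
`K` plays the role of the set of ordinals `< α` and `none` plays the role of `∞`. -/
def CTop (K : Type u) [Infinite K] (m : ℕ) : TopologicalSpace (Option (CIdx K m)) where
  IsOpen := CIsOpen K m
  isOpen_univ := cisOpen_univ K m
  isOpen_inter := cisOpen_inter K m
  isOpen_sUnion := cisOpen_sUnion K m

instance instCTop (K : Type u) [Infinite K] (m : ℕ) : TopologicalSpace (Option (CIdx K m)) :=
  CTop K m


/-! Let `V ξ` be the neighbourhood of `∞` formed by the columns `≥ ξ`. As `f⁻¹ (V ξ)` is open,
all but `< α` columns `ζ` of the domain have an open slice in it, so a recursion of length `α`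
(initial segments having size `< α`) picks such columns `e ξ` injectively. Put
`f' (ξ, x) = f (e ξ, x)` when this lies in a column `≥ ξ`, and `(ξ, (ξ, x))` otherwise. The slice
of `f'⁻¹ U` at `ξ` contains the intersection of the slices of `f⁻¹ U` and `f⁻¹ (V ξ)` at `e ξ`, so
`f'` is continuous because `e` is injective (`f (e ξ, x) ≠ ∞` as `f` is prime). -/

open Cardinal Set Function

section Choice

variable {K : Type u} [LinearOrder K] [WellFoundedLT K]

theorem exists_injective_forall_mem (hK : ℵ₀ ≤ #K) (hseg : ∀ ξ : K, #(Iio ξ) < #K)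
    (G : K → Set K) (hG : ∀ ξ, #((G ξ)ᶜ : Set K) < #K) :
    ∃ e : K → K, Injective e ∧ ∀ ξ, e ξ ∈ G ξ := by
  have hfresh : ∀ ξ (g : Iio ξ → K), (G ξ \ range g).Nonempty := by
    intro ξ g
    have hsmall : #((G ξ)ᶜ ∪ range g : Set K) < #K :=
      (mk_union_le _ _).trans_lt (add_lt_of_lt hK (hG ξ) (mk_range_le.trans_lt (hseg ξ)))
    have : ((G ξ)ᶜ ∪ range g)ᶜ.Nonempty :=
      nonempty_compl.2 fun h => by rw [h, mk_univ] at hsmall; exact hsmall.false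
    simpa only [compl_union, compl_compl, sdiff_eq] using this
  let e : K → K := wellFounded_lt.fix fun ξ e => (hfresh ξ fun η => e η η.2).some
  have he : ∀ ξ, e ξ ∈ G ξ \ range fun η : Iio ξ => e η := fun ξ => by
    rw [show e ξ = _ from wellFounded_lt.fix_eq _ ξ]
    exact Nonempty.some_mem _
  refine ⟨e, fun a b hab => ?_, fun ξ => (he ξ).1⟩
  by_contra hne
  rcases lt_or_gt_of_ne hne with h | h
  · exact (he b).2 ⟨⟨a, h⟩, hab⟩
  · exact (he a).2 ⟨⟨b, h⟩, hab.symm⟩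

end Choice

theorem cisOpen_succ_of_cslice {K : Type u} {m : ℕ} {e : K → K} (he : Injective e)
    {U W : Set (Option (CIdx K (m + 1)))} (hW : CIsOpen K (m + 1) W) (hnone : none ∈ U → none ∈ W)
    (hslice : ∀ ξ, CIsOpen K m (cslice W (e ξ)) → CIsOpen K m (cslice U ξ)) :
    CIsOpen K (m + 1) U := by
  intro hU
  refine (mk_le_mk_of_subset ?_).trans_lt
    ((mk_preimage_of_injective e _ he).trans_lt (hW (hnone hU)))
  exact fun ξ hξ h => hξ (hslice ξ h)

section Columns

variable {K : Type u} [LinearOrder K]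

def columnsFrom {J : Type u} (ξ : K) : Set (Option (K × J)) := {z | ∀ p ∈ z, ξ ≤ p.1}

theorem cslice_columnsFrom_of_le {J : Type u} {ξ η : K} (h : ξ ≤ η) :
    cslice (columnsFrom ξ : Set (Option (K × J))) η = Set.univ := by
  refine eq_univ_of_forall fun z => ?_
  cases z with
  | none => exact none_mem_cslice _ _
  | some x => exact (some_mem_cslice_iff _ _ _).2 fun p hp => (Option.some.inj hp) ▸ h

theorem cisOpen_columnsFrom (hseg : ∀ ξ : K, #(Iio ξ) < #K) (m : ℕ) (ξ : K) :
    CIsOpen K (m + 1) (columnsFrom ξ) := by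
  have : Nonempty K := ⟨ξ⟩
  intro _
  refine (mk_le_mk_of_subset fun η hη => ?_).trans_lt (hseg ξ)
  by_contra hle
  refine hη ?_
  change CIsOpen K m (cslice (columnsFrom ξ) η)
  rw [cslice_columnsFrom_of_le (not_lt.1 hle)]
  exact cisOpen_univ K m

end Columns

section ShiftedMap

variable {K J L : Type u} [LinearOrder K]

def keepIfAbove (ξ : K) (d : K × L) : Option (K × L) → K × L
  | some q => if ξ ≤ q.1 then q else d
  | none => d

theorem le_keepIfAbove_fst {ξ : K} {d : K × L} (h : ξ ≤ d.1) :
    ∀ o, ξ ≤ (keepIfAbove ξ d o).1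
  | some q => by dsimp only [keepIfAbove]; split_ifs <;> assumption
  | none => h

theorem keepIfAbove_some_of_le {ξ : K} {d q : K × L} (h : ξ ≤ q.1) :
    keepIfAbove ξ d (some q) = q := if_pos h

def shiftedMap (f : Option (K × J) → Option (K × (K × J))) (e : K → K) :
    Option (K × J) → Option (K × (K × J)) :=
  Option.map fun p => keepIfAbove p.1 (p.1, p) (f (some (e p.1, p.2)))

variable (f : Option (K × J) → Option (K × (K × J))) (e : K → K)

theorem shiftedMap_preimage_none : shiftedMap f e ⁻¹' {none} = {none} := by
  ext z
  cases z <;> simp [shiftedMap]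

theorem disjoint_shiftedMap_image (ξ : K) :
    Disjoint (shiftedMap f e '' {z | ∃ x, z = some (ξ, x)})
      {z | ∃ (η : K) (v : K × J), η < ξ ∧ z = some (η, v)} := by
  rw [Set.disjoint_left]
  rintro _ ⟨_, ⟨x, rfl⟩, rfl⟩ ⟨η, v, hη, hv⟩
  have hle : ξ ≤ (keepIfAbove ξ (ξ, ξ, x) (f (some (e ξ, x)))).1 :=
    le_keepIfAbove_fst (d := (ξ, ξ, x)) le_rfl _
  simp only [shiftedMap, Option.map_some, Option.some.injEq] at hv
  rw [hv] at hle
  exact (hle.trans_lt hη).false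

end ShiftedMap

theorem continuous_shiftedMap {K : Type u} [Infinite K] [LinearOrder K] {r : ℕ}
    {f : Option (CIdx K (r + 1)) → Option (CIdx K (r + 2))} (hfc : Continuous f)
    (hfp : f ⁻¹' {none} = {none}) {e : K → K} (he : Injective e)
    (hgood : ∀ ξ, CIsOpen K r (cslice (f ⁻¹' columnsFrom ξ) (e ξ))) :
    Continuous (X := Option (CIdx K (r + 1))) (Y := Option (CIdx K (r + 2)))
      (shiftedMap (J := CIdx K r) f e) := by
  have hf : ∀ z, f z = none ↔ z = none := fun z => Set.ext_iff.1 hfp z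
  refine ⟨fun U hU => ?_⟩
  refine cisOpen_succ_of_cslice he (hfc.isOpen_preimage U hU)
    (fun h => by change f none ∈ U; rwa [(hf none).2 rfl]) fun ξ hξ => ?_
  refine cisOpen_mono K r _ _ (cisOpen_inter K r _ _ hξ (hgood ξ)) ?_
    fun _ => ⟨none_mem_cslice _ _, none_mem_cslice _ _⟩
  rintro (_ | x) ⟨hU, htail⟩
  · exact none_mem_cslice _ _
  replace hU : f (some (e ξ, x)) ∈ U := (some_mem_cslice_iff _ _ _).1 hU
  replace htail : f (some (e ξ, x)) ∈ columnsFrom ξ := (some_mem_cslice_iff _ _ _).1 htail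
  obtain ⟨q, hq⟩ : ∃ q : K × (K × CIdx K r), f (some (e ξ, x)) = some q :=
    Option.ne_none_iff_exists'.1 fun h => Option.some_ne_none _ ((hf _).1 h)
  refine (some_mem_cslice_iff _ _ _).2 ?_
  change some (keepIfAbove ξ (ξ, ξ, x) (f (some (e ξ, x)))) ∈ U
  rw [hq] at hU htail ⊢
  rwa [keepIfAbove_some_of_le (L := K × CIdx K r) (htail q rfl)]

theorem stmt13_general (K : Type u) [Infinite K] [LinearOrder K] [IsWellOrder K (· < ·)]
    (htype : Ordinal.type ((· < ·) : K → K → Prop) = (Cardinal.mk K).ord)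
    (r : ℕ)
    (f : Option (CIdx K (r + 1)) → Option (CIdx K (r + 2)))
    (hfc : Continuous f) (hfp : f ⁻¹' {none} = {none}) :
    ∃ f' : Option (CIdx K (r + 1)) → Option (CIdx K (r + 2)),
      Continuous f' ∧ f' ⁻¹' {none} = {none} ∧
      ∀ ξ : K, Disjoint
        (f' '' {z : Option (CIdx K (r + 1)) | ∃ x : CIdx K r, z = some (ξ, x)})
        {z : Option (CIdx K (r + 2)) | ∃ (η : K) (v : CIdx K (r + 1)), η < ξ ∧ z = some (η, v)}
        := by
  have hseg : ∀ ξ : K, #(Iio ξ) < #K := fun ξ => mk_Iio_lt ξ htype.symm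
  have hfnone : f none = none := (Set.ext_iff.1 hfp none).2 rfl
  obtain ⟨e, he, hgood⟩ := exists_injective_forall_mem (aleph0_le_mk K) hseg
    (fun ξ => {ζ | CIsOpen K r (cslice (f ⁻¹' columnsFrom ξ) ζ)})
    fun ξ => hfc.isOpen_preimage _ (cisOpen_columnsFrom hseg (r + 1) ξ)
      (by show ∀ p ∈ f none, ξ ≤ p.1; rw [hfnone]; exact fun _ h => nomatch h)
  exact ⟨shiftedMap f e, continuous_shiftedMap hfc hfp he hgood, shiftedMap_preimage_none f e,
    disjoint_shiftedMap_image f e⟩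

/-- let `α ≥ ω₁` be regular (here `K` is the set of ordinals `< α`, i.e. a
well-ordered set of order type the initial ordinal of `α = #K`) and `2 ≤ n < ω`.  If there is
a prime map `f : C⁻(α,n) → C⁻(α,n+1)`, then there is a prime map
`f' : C⁻(α,n) → C⁻(α,n+1)` such that for every `ξ < α` the image `f' ({ξ} × α^{n-1})` is
disjoint from `⋃_{η<ξ} {η} × α^n`.  Here `CTop K m` is `C⁻(α, m+1)` and `none` is `∞`; the
paper's `n ≥ 2` corresponds to `n = r + 2`, and `CIdx K (r+1) = K × CIdx K r` realizes the
identification `α^n = α × α^{n-1}` (similarly for `α^{n+1}`). -/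
theorem stmt13 (K : Type u) [Infinite K] [LinearOrder K] [IsWellOrder K (· < ·)]
    (htype : Ordinal.type ((· < ·) : K → K → Prop) = (Cardinal.mk K).ord)
    (hreg : (Cardinal.mk K).IsRegular) (hω1 : Cardinal.aleph 1 ≤ Cardinal.mk K) (r : ℕ)
    (f : Option (CIdx K (r + 1)) → Option (CIdx K (r + 2)))
    (hfc : Continuous f) (hfp : f ⁻¹' {none} = {none}) :
    ∃ f' : Option (CIdx K (r + 1)) → Option (CIdx K (r + 2)),
      Continuous f' ∧ f' ⁻¹' {none} = {none} ∧
      ∀ ξ : K, Disjoint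
        (f' '' {z : Option (CIdx K (r + 1)) | ∃ x : CIdx K r, z = some (ξ, x)})
        {z : Option (CIdx K (r + 2)) | ∃ (η : K) (v : CIdx K (r + 1)), η < ξ ∧ z = some (η, v)} :=
  stmt13_general K htype r f hfc hfp
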